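/- Let T be a triangulated category with Serre functor ν and P a d-silting subcategory admitting an adjacent t-structure (T_{≤0}^P, T^{≥0}_P). If X ∈ T satisfies Hom_T(P, X[i]) = 0 for all 1 ≤ i ≤ d−1, then X decomposes as X ≅ X' ⊕ Y with X' ∈ T_{≤0}^P and Y ∈ T^{≥d}_P. -/

import Mathlib

/-!
STATEMENT 9: If P is a d-silting subcategory of T admitting an adjacent t-structure
(T_{≤0}^P, T^{≥0}_P) and X ∈ T satisfies Hom(P, X[i]) = 0 for 1 ≤ i ≤ d-1, then
X ≅ X' ⊕ Y with X' ∈ T_{≤0}^P and Y ∈ T^{≥d}_P.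
-/

open CategoryTheory CategoryTheory.Limits CategoryTheory.Pretriangulated

universe w v u

variable (k : Type w) [Field k]
variable (C : Type u) [Category.{v} C] [Preadditive C] [Linear k C] [HasZeroObject C]
  [HasShift C ℤ] [∀ n : ℤ, (CategoryTheory.shiftFunctor C n).Additive] [Pretriangulated C]
  [HasBinaryBiproducts C]

/-- A Serre functor on a k-linear category: an (additive) autoequivalence ν together
with functorial isomorphisms D Hom(X,Y) ≅ Hom(Y, νX). -/
structure SerreFunctor : Type (max (max u v) w) where
  ν : C ≌ C
  additive : ν.functor.Additive
  duality : ∀ X Y : C, (Y ⟶ ν.functor.obj X) ≃ₗ[k] Module.Dual k (X ⟶ Y)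
  natural : ∀ (X Y X' Y' : C) (a : X ⟶ X') (b : Y' ⟶ Y) (f : Y ⟶ ν.functor.obj X),
    duality X' Y' (b ≫ f ≫ ν.functor.map a) = fun g => duality X Y f (a ≫ g ≫ b)

variable {k C}

/-- ν_d = ν ∘ [-d]. -/
def nud (S : SerreFunctor k C) (d : ℕ) : C ⥤ C :=
  CategoryTheory.shiftFunctor C (-(d : ℤ)) ⋙ S.ν.functor

/-- The inverse of ν_d. -/
def nudInv (S : SerreFunctor k C) (d : ℕ) : C ⥤ C :=
  S.ν.inverse ⋙ CategoryTheory.shiftFunctor C (d : ℤ)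


/-- Iteration of an endofunctor. -/
def iterObj (F : C ⥤ C) : ℕ → C → C
  | 0, X => X
  | n + 1, X => F.obj (iterObj F n X)

/-- A thick subcategory: closed under isomorphisms, shifts, extensions and
direct summands. -/
structure IsThick (Z : Set C) : Prop where
  iso : ∀ {X Y : C}, (X ≅ Y) → X ∈ Z → Y ∈ Z
  shift : ∀ X ∈ Z, ∀ n : ℤ, X⟦n⟧ ∈ Z
  ext₂ : ∀ T ∈ distTriang C, T.obj₁ ∈ Z → T.obj₃ ∈ Z → T.obj₂ ∈ Z
  summand : ∀ X Y : C, [HasBinaryBiproduct X Y] → (X ⊞ Y) ∈ Z → X ∈ Z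

/-- `S` generates `C` as a thick subcategory: `thick S = C`. -/
def GeneratesThick (S : Set C) : Prop :=
  ∀ Z : Set C, IsThick Z → S ⊆ Z → ∀ X : C, X ∈ Z

/-- A presilting subcategory: Hom(P, P[i]) = 0 for all i ≥ 1. -/
def IsPresiltingSet (P : Set C) : Prop :=
  ∀ A ∈ P, ∀ B ∈ P, ∀ i : ℤ, 1 ≤ i → ∀ f : A ⟶ B⟦i⟧, f = 0

/-- A silting subcategory: presilting and generating C as a thick subcategory. -/
def IsSiltingSet (P : Set C) : Prop := IsPresiltingSet P ∧ GeneratesThick P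

/-- The coaisle T_{≥0}^P = ^⊥(P[>0]) of the co-t-structure associated to P. -/
def coAisleGE (P : Set C) : Set C :=
  {X | ∀ A ∈ P, ∀ i : ℤ, 1 ≤ i → ∀ f : X ⟶ A⟦i⟧, f = 0}

/-- The aisle T_{≤0}^P = (P[<0])^⊥ of the co-t-structure associated to P. -/
def coAisleLE (P : Set C) : Set C :=
  {X | ∀ A ∈ P, ∀ i : ℤ, 1 ≤ i → ∀ f : A⟦-i⟧ ⟶ X, f = 0}


/-- The shift `S[n]` of a subcategory. -/
def shiftSet (S : Set C) (n : ℤ) : Set C := {X | ∃ A ∈ S, Nonempty (X ≅ A⟦n⟧)}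

/-- The t-structure adjacent to the co-t-structure of a silting subcategory `P`:
a pair with aisle `T_{≤0}^P` and coaisle `B = T^{≥1}_P`. -/
structure AdjacentTStructure (P : Set C) (B : Set C) : Prop where
  shift_aisle : ∀ X ∈ coAisleLE P, X⟦(1:ℤ)⟧ ∈ coAisleLE P
  shift_coaisle : ∀ X ∈ B, X⟦(-1:ℤ)⟧ ∈ B
  iso_closed : ∀ {X Y : C}, (X ≅ Y) → X ∈ B → Y ∈ B
  orth : ∀ X ∈ coAisleLE P, ∀ Y ∈ B, ∀ f : X ⟶ Y, f = 0
  decomp : ∀ T : C, ∃ A ∈ coAisleLE P, ∃ Y ∈ B,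
    ∃ (f : A ⟶ T) (g : T ⟶ Y) (h : Y ⟶ A⟦(1:ℤ)⟧),
      Triangle.mk f g h ∈ distTriang C

/-!
Let `A ⟶ X ⟶ Z ⟶ A⟦1⟧` be the truncation triangle of `X` for the adjacent t-structure. Since
`Hom(P, X⟦i⟧) = 0` for `1 ≤ i ≤ d - 1`, the long exact sequence shows that `Hom(P⟦t⟧, Z) = 0` for
all `t ≥ 1 - d`, which puts `Z` into `T^{≥d}_P`. By Serre duality and the `d`-silting condition,
`ν⁻¹(T_{≤0}^P⟦d⟧) ⊆ T_{≤0}^P`, hence `Hom(T^{≥1}_P, T_{≤0}^P⟦d⟧) = 0`; so the connecting map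
`Z ⟶ A⟦1⟧` vanishes and the triangle splits.
-/

section HomVanishes

variable {C : Type*} [Category C] [HasZeroMorphisms C]

def HomVanishes (X Y : C) : Prop :=
  ∀ f : X ⟶ Y, f = 0

lemma homVanishes_congr {X X' Y Y' : C} (e₁ : X ≅ X') (e₂ : Y ≅ Y') :
    HomVanishes X Y ↔ HomVanishes X' Y' := by
  suffices ∀ {X X' Y Y' : C} (e₁ : X ≅ X') (e₂ : Y ≅ Y'), HomVanishes X Y → HomVanishes X' Y' from
    ⟨this e₁ e₂, this e₁.symm e₂.symm⟩
  intro X X' Y Y' e₁ e₂ h f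
  simpa using congrArg (fun g => e₁.inv ≫ g ≫ e₂.hom) (h (e₁.hom ≫ f ≫ e₂.inv))

lemma homVanishes_map_iff {D : Type*} [Category D] [HasZeroMorphisms D] (F : C ⥤ D) [F.Full]
    [F.Faithful] [F.PreservesZeroMorphisms] {X Y : C} :
    HomVanishes (F.obj X) (F.obj Y) ↔ HomVanishes X Y := by
  refine ⟨fun h f => F.map_injective ?_, fun h f => ?_⟩
  · rw [h (F.map f), F.map_zero]
  · rw [← F.map_preimage f, h (F.preimage f), F.map_zero]

variable [HasShift C ℤ] {X Y : C}

lemma homVanishes_shift_iff (n : ℤ) : HomVanishes (X⟦n⟧) (Y⟦n⟧) ↔ HomVanishes X Y :=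
  homVanishes_map_iff _

lemma homVanishes_shift_left_iff {a b : ℤ} (h : a + b = 0) :
    HomVanishes (X⟦a⟧) Y ↔ HomVanishes X (Y⟦b⟧) :=
  (homVanishes_shift_iff b).symm.trans
    (homVanishes_congr ((shiftFunctorCompIsoId C a b h).app X) (Iso.refl _))

lemma homVanishes_shift_right_iff {a b : ℤ} (h : a + b = 0) :
    HomVanishes X (Y⟦a⟧) ↔ HomVanishes (X⟦b⟧) Y :=
  (homVanishes_shift_left_iff (by omega)).symm

lemma homVanishes_shift_add_left_iff {a b c : ℤ} (h : a + b = c) :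
    HomVanishes (X⟦c⟧) (Y⟦b⟧) ↔ HomVanishes (X⟦a⟧) Y :=
  (homVanishes_congr ((shiftFunctorAdd' C a b c h).app X) (Iso.refl _)).trans
    (homVanishes_shift_iff b)

lemma homVanishes_shift_add_right_iff {a b c : ℤ} (h : a + b = c) :
    HomVanishes (X⟦b⟧) (Y⟦c⟧) ↔ HomVanishes X (Y⟦a⟧) :=
  (homVanishes_congr (Iso.refl _) ((shiftFunctorAdd' C a b c h).app Y)).trans
    (homVanishes_shift_iff b)

end HomVanishes

namespace SerreFunctor

variable {k : Type*} [Field k] {C : Type*} [Category C] [Preadditive C] [Linear k C]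
  (S : SerreFunctor k C)

lemma homVanishes_iff (X Y : C) : HomVanishes X Y ↔ HomVanishes Y (S.ν.functor.obj X) := by
  constructor
  · intro h g
    apply (S.duality X Y).injective
    ext f
    simp [h f]
  · intro h f
    rw [← Module.forall_dual_apply_eq_zero_iff k]
    intro φ
    obtain ⟨g, rfl⟩ := (S.duality X Y).surjective φ
    simp [h g]

end SerreFunctor

section Triangles

variable {C : Type*} [Category C] [Preadditive C] [HasZeroObject C] [HasShift C ℤ]
  [∀ n : ℤ, (shiftFunctor C n).Additive] [Pretriangulated C]

lemma homVanishes_obj₂_of_distTriang {T : Triangle C} (hT : T ∈ distTriang C) {W : C}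
    (h₁ : HomVanishes W T.obj₁) (h₃ : HomVanishes W T.obj₃) : HomVanishes W T.obj₂ := by
  intro f
  obtain ⟨g, rfl⟩ := Triangle.coyoneda_exact₂ T hT f (h₃ _)
  rw [h₁ g, zero_comp]

lemma homVanishes_obj₃_of_distTriang {T : Triangle C} (hT : T ∈ distTriang C) {W : C}
    (h₂ : HomVanishes W T.obj₂) (h₁ : HomVanishes W (T.obj₁⟦(1 : ℤ)⟧)) :
    HomVanishes W T.obj₃ :=
  homVanishes_obj₂_of_distTriang (rot_of_distTriang T hT) h₂ h₁

lemma homVanishes_obj₁_of_distTriang {T : Triangle C} (hT : T ∈ distTriang C) {W : C}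
    (h₃ : HomVanishes W (T.obj₃⟦(-1 : ℤ)⟧)) (h₂ : HomVanishes W T.obj₂) :
    HomVanishes W T.obj₁ :=
  homVanishes_obj₂_of_distTriang (inv_rot_of_distTriang T hT) h₃ h₂

lemma homVanishes_from_obj₂_of_distTriang {T : Triangle C} (hT : T ∈ distTriang C) {W : C}
    (h₁ : HomVanishes T.obj₁ W) (h₃ : HomVanishes T.obj₃ W) : HomVanishes T.obj₂ W := by
  intro f
  obtain ⟨g, rfl⟩ := Triangle.yoneda_exact₂ T hT f (h₁ _)
  rw [h₃ g, comp_zero]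

end Triangles

section CoAisle

variable {C : Type*} [Category C] [Preadditive C] [HasShift C ℤ] {P : Set C}

lemma mem_coAisleLE_of_iso {X Y : C} (e : X ≅ Y) (hX : X ∈ coAisleLE P) : Y ∈ coAisleLE P :=
  fun A hA i hi => (homVanishes_congr (Iso.refl _) e).1 (hX A hA i hi)

lemma IsPresiltingSet.mem_coAisleLE (hP : IsPresiltingSet P) {Q : C} (hQ : Q ∈ P) :
    Q ∈ coAisleLE P :=
  fun A hA i hi => (homVanishes_shift_left_iff (neg_add_cancel i)).2 (hP A hA Q hQ i hi)

lemma homVanishes_of_mem_coAisleLE {X Q : C} (hX : X ∈ coAisleLE P) (hQ : Q ∈ P) {n : ℤ}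
    (hn : n < 0) : HomVanishes (Q⟦n⟧) X := by
  have := hX Q hQ (-n) (by omega)
  rwa [neg_neg] at this

end CoAisle

section Silting

variable {C : Type*} [Category C] [Preadditive C] [HasZeroObject C] [HasShift C ℤ]
  [∀ n : ℤ, (shiftFunctor C n).Additive] [Pretriangulated C] {P B : Set C}

lemma isThick_setOf_forall_homVanishes_shift (V : C) :
    IsThick {G : C | ∀ n : ℤ, HomVanishes (G⟦n⟧) V} where
  iso e hX n := (homVanishes_congr ((shiftFunctor C n).mapIso e) (Iso.refl V)).1 (hX n)
  shift X hX m n := (homVanishes_congr ((shiftFunctorAdd' C m n _ rfl).app X) (Iso.refl V)).1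
    (hX (m + n))
  ext₂ T hT h₁ h₃ n := homVanishes_from_obj₂_of_distTriang (Triangle.shift_distinguished T hT n)
    (h₁ n) (h₃ n)
  summand X Y _ hXY n f := by
    have := congrArg ((shiftFunctor C n).map biprod.inl ≫ ·)
      (hXY n ((shiftFunctor C n).map (biprod.fst : X ⊞ Y ⟶ X) ≫ f))
    rwa [← Functor.map_comp_assoc, biprod.inl_fst, CategoryTheory.Functor.map_id,
      Category.id_comp, comp_zero] at this

lemma GeneratesThick.isZero_of_homVanishes (hP : GeneratesThick P) {V : C}
    (h : ∀ Q ∈ P, ∀ n : ℤ, HomVanishes (Q⟦n⟧) V) : IsZero V := by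
  have hV : HomVanishes V V := (homVanishes_congr ((shiftFunctorZero C ℤ).app V) (Iso.refl V)).1
    (hP _ (isThick_setOf_forall_homVanishes_shift V) h V 0)
  exact (IsZero.iff_id_eq_zero V).2 (hV _)

namespace AdjacentTStructure

variable (hadj : AdjacentTStructure P B)
include hadj

lemma shift_mem_coAisleLE {X : C} (hX : X ∈ coAisleLE P) {m : ℤ} (hm : 0 ≤ m) :
    X⟦m⟧ ∈ coAisleLE P := by
  induction m, hm using Int.leInduction with
  | base => exact mem_coAisleLE_of_iso ((shiftFunctorZero C ℤ).app X).symm hX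
  | succ m _ ih =>
    exact mem_coAisleLE_of_iso ((shiftFunctorAdd' C m 1 (m + 1) rfl).app X).symm
      (hadj.shift_aisle _ ih)

lemma shift_mem_of_homVanishes (hP : IsSiltingSet P) {V : C} (c : ℤ)
    (h : ∀ Q ∈ P, ∀ j : ℤ, -c ≤ j → HomVanishes (Q⟦j⟧) V) : V⟦c⟧ ∈ B := by
  obtain ⟨A, hA, Z, hZ, _, g, _, hT⟩ := hadj.decomp (V⟦c⟧)
  suffices IsZero A by
    have : IsIso g := (Triangle.isZero₁_iff_isIso₂ _ hT).1 this
    exact hadj.iso_closed (asIso g).symm hZ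
  refine hP.2.isZero_of_homVanishes fun Q hQ n => ?_
  rcases lt_or_ge n 0 with hn | hn
  · exact homVanishes_of_mem_coAisleLE hA hQ hn
  · refine homVanishes_obj₁_of_distTriang hT ?_ ?_
    · refine (homVanishes_shift_right_iff (neg_add_cancel 1)).2 (hadj.orth _ ?_ _ hZ)
      exact hadj.shift_aisle _ (hadj.shift_mem_coAisleLE (hP.1.mem_coAisleLE hQ) hn)
    · exact (homVanishes_shift_add_left_iff (sub_add_cancel n c)).2 (h Q hQ _ (by omega))

lemma shift_obj₃_mem (hP : IsSiltingSet P) {T : Triangle C} (hT : T ∈ distTriang C)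
    (h₁ : T.obj₁ ∈ coAisleLE P) (h₃ : T.obj₃ ∈ B) (n : ℤ)
    (h₂ : ∀ Q ∈ P, ∀ i : ℤ, 1 ≤ i → i ≤ n → HomVanishes Q (T.obj₂⟦i⟧)) : T.obj₃⟦n⟧ ∈ B := by
  refine hadj.shift_mem_of_homVanishes hP n fun Q hQ t ht => ?_
  rcases le_or_gt 0 t with ht₀ | ht₀
  · exact hadj.orth _ (hadj.shift_mem_coAisleLE (hP.1.mem_coAisleLE hQ) ht₀) _ h₃
  · refine homVanishes_obj₃_of_distTriang hT ?_ ?_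
    · exact (homVanishes_shift_left_iff (add_neg_cancel t)).2 (h₂ Q hQ (-t) (by omega) (by omega))
    · exact (homVanishes_shift_add_left_iff (sub_add_cancel t 1)).2
        (homVanishes_of_mem_coAisleLE h₁ hQ (by omega))

section Serre

variable {k : Type*} [Field k] [Linear k C] (S : SerreFunctor k C) (hP : IsSiltingSet P) {d : ℤ}
  (hd : ∀ A ∈ P, ∀ A' ∈ P, ∀ i : ℤ, d < i → ∀ f : S.ν.functor.obj A ⟶ A'⟦i⟧, f = 0)
include hP hd

-- `ν` is not assumed to commute with shifts, so the `d`-silting condition enters through the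
-- coaisle criterion `shift_mem_of_homVanishes`, applied to `ν((νQ)⟦-i⟧)`.
lemma serre_inverse_shift_mem_coAisleLE {W : C} (hW : W ∈ coAisleLE P) :
    S.ν.inverse.obj (W⟦d⟧) ∈ coAisleLE P := by
  intro Q hQ i hi
  have hνY : (S.ν.functor.obj ((S.ν.functor.obj Q)⟦-i⟧))⟦i - d - 1⟧ ∈ B :=
    hadj.shift_mem_of_homVanishes hP _ fun Q' hQ' j hj => (S.homVanishes_iff _ _).1
      ((homVanishes_shift_add_right_iff (add_neg_cancel_right j i)).2
        (hd Q hQ Q' hQ' (j + i) (by omega)))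
  have h₁ : HomVanishes (W⟦d⟧) (S.ν.functor.obj ((S.ν.functor.obj Q)⟦-i⟧)) :=
    (homVanishes_shift_add_left_iff (by ring)).1
      (hadj.orth _ (hadj.shift_mem_coAisleLE hW (by omega : 0 ≤ i - 1)) _ hνY)
  have h₂ : HomVanishes (S.ν.inverse.obj (W⟦d⟧)) ((S.ν.functor.obj Q)⟦-i⟧) :=
    (homVanishes_map_iff S.ν.functor).1
      ((homVanishes_congr (S.ν.counitIso.app _).symm (Iso.refl _)).1 h₁)
  exact (homVanishes_shift_left_iff (neg_add_cancel i)).2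
    ((S.homVanishes_iff _ _).2 ((homVanishes_shift_right_iff (neg_add_cancel i)).1 h₂))

lemma homVanishes_shift_coAisleLE {V W : C} (hV : V ∈ B) (hW : W ∈ coAisleLE P) :
    HomVanishes V (W⟦d⟧) :=
  (homVanishes_congr (Iso.refl V) (S.ν.counitIso.app _)).1 ((S.homVanishes_iff _ _).1
    (hadj.orth _ (hadj.serre_inverse_shift_mem_coAisleLE S hP hd hW) V hV))

end Serre

end AdjacentTStructure

end Silting

theorem statement_9_general (S : SerreFunctor k C) (d : ℕ)
    (P : Set C) (hsilt : IsSiltingSet P)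
    -- P is d-silting: Hom(ν(P), P[i]) = 0 for all i > d
    (hdsilt : ∀ A ∈ P, ∀ B ∈ P, ∀ i : ℤ, (d : ℤ) < i →
      ∀ f : S.ν.functor.obj A ⟶ B⟦i⟧, f = 0)
    (B : Set C) (hadj : AdjacentTStructure P B)
    (X : C)
    (hX : ∀ A ∈ P, ∀ i : ℤ, 1 ≤ i → i ≤ (d : ℤ) - 1 → ∀ f : A ⟶ X⟦i⟧, f = 0) :
    ∃ X' ∈ coAisleLE P, ∃ Y ∈ shiftSet B (1 - (d : ℤ)), Nonempty (X ≅ X' ⊞ Y) := by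
  obtain ⟨A, hA, Z, hZ, _, _, h, hT⟩ := hadj.decomp X
  have hZd : Z⟦(d : ℤ) - 1⟧ ∈ B := hadj.shift_obj₃_mem hsilt hT hA hZ _ hX
  have hh : h = 0 := (homVanishes_shift_add_right_iff (by ring)).1
    (hadj.homVanishes_shift_coAisleLE S hsilt hdsilt hZd hA) h
  obtain ⟨e, -, -⟩ := exists_iso_binaryBiproduct_of_distTriang _ hT hh
  exact ⟨A, hA, Z, ⟨_, hZd, ⟨((shiftFunctorCompIsoId C _ _ (by ring)).app Z).symm⟩⟩, ⟨e⟩⟩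

theorem statement_9 (S : SerreFunctor k C) (d : ℕ) (hd : 1 ≤ d)
    (P : Set C) (hsilt : IsSiltingSet P)
    -- P is d-silting: Hom(ν(P), P[i]) = 0 for all i > d
    (hdsilt : ∀ A ∈ P, ∀ B ∈ P, ∀ i : ℤ, (d : ℤ) < i →
      ∀ f : S.ν.functor.obj A ⟶ B⟦i⟧, f = 0)
    (B : Set C) (hadj : AdjacentTStructure P B)
    (X : C)
    (hX : ∀ A ∈ P, ∀ i : ℤ, 1 ≤ i → i ≤ (d : ℤ) - 1 → ∀ f : A ⟶ X⟦i⟧, f = 0) :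
    ∃ X' ∈ coAisleLE P, ∃ Y ∈ shiftSet B (1 - (d : ℤ)), Nonempty (X ≅ X' ⊞ Y) :=
  statement_9_general S d P hsilt hdsilt B hadj X hX
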